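/- For all 0 < u < v < 1 and every k ∈ ℝ: (ℰ_u^c)'(k−) − (v−u) ≤ (ℰ_v^c)'(k−) ≤ (ℰ_u^c)'(k−), and (ℰ_u^c)'(k+) − (v−u) ≤ (ℰ_v^c)'(k+) ≤ (ℰ_u^c)'(k+), where g'(k−) and g'(k+) denote the left and right derivatives of the convex function g at k. -/

import Mathlib

/-!
Write `ℰ_u = P_ν - Φ_u`, where `Φ_u` is `P_μ` continued affinely with slope `u` to the right of
`G(u)`. For `u < v`, the difference `ℰ_u - ℰ_v = Φ_v - Φ_u` is nondecreasing with slopes at most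
`v - u`, because `P_μ` has slopes between `u` and `v` on `[G(u), G(v)]`.

The theorem then follows from a comparison principle for convex envelopes: if `f - g` is
nondecreasing and both are continuous, the one-sided derivatives of the envelope of `g` are at most
those of the envelope of `f`. Applied to `(ℰ_u, ℰ_v)` it gives the upper bounds, applied to
`(ℰ_v, ℰ_u - (v - u) · id)` the lower ones. For the comparison of right derivatives, suppose
`F'(k+) < s < G'(k+)`. Since `g ≥ f - (f k - g k)` to the left of `k`, the line of slope `s`
through `(k, F k - (f k - g k))` lies below `g` there; if it started above `G k`, a slightly raised
line of slope `s` would fit under all of `g`, contradicting maximality of `G`. Hence it starts below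
`G k`, and then the line of slope `s` through `(k, F k)` fits under `f`, forcing `F'(k+) ≥ s`.
Left derivatives follow by reflection `x ↦ -x`.
-/

open MeasureTheory Set Filter Topology

section ConvexDeriv

variable {F : ℝ → ℝ} {k : ℝ}

lemma ConvexOn.add_rightDeriv_mul_sub_le (hF : ConvexOn ℝ univ F) (w : ℝ) :
    F k + derivWithin F (Ioi k) k * (w - k) ≤ F w := by
  have hk : k ∈ interior univ := by simp
  rcases lt_trichotomy w k with hwk | rfl | hkw
  · have h := (hF.slope_le_leftDeriv_of_mem_interior (mem_univ w) hk hwk).trans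
      (hF.leftDeriv_le_rightDeriv_of_mem_interior hk)
    rw [slope_def_field, div_le_iff₀ (sub_pos.2 hwk)] at h
    linarith
  · simp
  · have h := hF.rightDeriv_le_slope_of_mem_interior hk (mem_univ w) hkw
    rw [slope_def_field, le_div_iff₀ (sub_pos.2 hkw)] at h
    linarith

lemma ConvexOn.le_rightDeriv_of_forall_le (hF : ConvexOn ℝ univ F) {s : ℝ}
    (h : ∀ w, k < w → F k + s * (w - k) ≤ F w) : s ≤ derivWithin F (Ioi k) k := by
  rw [hF.rightDeriv_eq_sInf_slope_of_mem_interior (by simp)]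
  have hk1 : k + 1 ∈ {y | y ∈ univ ∧ k < y} := ⟨mem_univ _, lt_add_one k⟩
  refine le_csInf ⟨_, mem_image_of_mem _ hk1⟩ ?_
  rintro _ ⟨w, ⟨-, hkw⟩, rfl⟩
  rw [slope_def_field, le_div_iff₀ (sub_pos.2 hkw)]
  linarith [h w hkw]

lemma derivWithin_sub_mul_id {s : Set ℝ} (hF : DifferentiableWithinAt ℝ F s k)
    (hs : UniqueDiffWithinAt ℝ s k) (c : ℝ) :
    derivWithin (fun x => F x - c * x) s k = derivWithin F s k - c := by
  have h : HasDerivWithinAt (fun x => F x - c * x) (derivWithin F s k - c * 1) s k :=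
    hF.hasDerivWithinAt.sub ((hasDerivWithinAt_id k s).const_mul c)
  rw [h.derivWithin hs, mul_one]

end ConvexDeriv

lemma convexOn_affine (c s k : ℝ) : ConvexOn ℝ univ (fun w : ℝ => c + s * (w - k)) :=
  (((LinearMap.mulLeft ℝ s).convexOn convex_univ).add_const (c - s * k)).congr
    fun w _ => by simp; ring

structure IsConvexEnvelope (f F : ℝ → ℝ) : Prop where
  convexOn : ConvexOn ℝ univ F
  le : ∀ x, F x ≤ f x
  le_of_convexOn : ∀ h : ℝ → ℝ, ConvexOn ℝ univ h → (∀ x, h x ≤ f x) → ∀ x, h x ≤ F x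

namespace IsConvexEnvelope

variable {f g F G : ℝ → ℝ} {k : ℝ}

lemma affine_le (hF : IsConvexEnvelope f F) {c s : ℝ} (h : ∀ w, c + s * (w - k) ≤ f w)
    (w : ℝ) : c + s * (w - k) ≤ F w :=
  hF.le_of_convexOn _ (convexOn_affine c s k) h w

lemma comp_neg (hF : IsConvexEnvelope f F) :
    IsConvexEnvelope (fun x => f (-x)) (fun x => F (-x)) where
  convexOn := hF.convexOn.comp_linearMap (-LinearMap.id)
  le x := hF.le (-x)
  le_of_convexOn h hh hle x := by
    simpa using hF.le_of_convexOn (fun x => h (-x))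
      (hh.comp_linearMap (-LinearMap.id)) (fun x => by simpa using hle (-x)) (-x)

lemma sub_mul_id (hF : IsConvexEnvelope f F) (c : ℝ) :
    IsConvexEnvelope (fun x => f x - c * x) (fun x => F x - c * x) where
  convexOn := hF.convexOn.sub ((LinearMap.mulLeft ℝ c).concaveOn convex_univ)
  le x := sub_le_sub_right (hF.le x) _
  le_of_convexOn h hh hle x := by
    have := hF.le_of_convexOn (fun x => h x + c * x)
      (hh.add ((LinearMap.mulLeft ℝ c).convexOn convex_univ)) (fun x => by linarith [hle x]) x
    linarith

lemma le_of_lt_rightDeriv (hF : IsConvexEnvelope f F) (hf : ContinuousAt f k) {m s : ℝ}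
    (hs : s < derivWithin F (Ioi k) k) (hleft : ∀ w ≤ k, m + s * (w - k) ≤ f w) : m ≤ F k := by
  by_contra! hFm
  set t := derivWithin F (Ioi k) k
  obtain ⟨δ, hδ, hnear⟩ : ∃ δ > 0, ∀ w, dist w k < δ → (m + F k) / 2 < f w - s * (w - k) := by
    have hcont : ContinuousAt (fun w => f w - s * (w - k)) k := hf.sub (by fun_prop)
    refine Metric.eventually_nhds_iff.1 (hcont.eventually (lt_mem_nhds ?_))
    linarith [hleft k le_rfl]
  set ε := min ((m - F k) / 2) ((t - s) * δ)
  have hε : 0 < ε := lt_min (by linarith) (mul_pos (by linarith) hδ)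
  have hεm : ε ≤ (m - F k) / 2 := min_le_left _ _
  -- The raised line still fits under `f`: on the left by hypothesis, near `k` by continuity,
  -- and far to the right because `F` grows there with slope `t > s`.
  have hline : ∀ w, F k + ε + s * (w - k) ≤ f w := by
    intro w
    rcases le_or_gt w k with hwk | hkw
    · linarith [hleft w hwk]
    rcases lt_or_ge w (k + δ) with hw | hw
    · have := hnear w (by rw [Real.dist_eq, abs_of_pos (by linarith)]; linarith)
      linarith
    · have hεt : ε ≤ (t - s) * δ := min_le_right _ _
      have : (t - s) * δ ≤ (t - s) * (w - k) :=
        mul_le_mul_of_nonneg_left (by linarith) (by linarith)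
      linarith [hF.convexOn.add_rightDeriv_mul_sub_le (k := k) w, hF.le w]
  linarith [hF.affine_le hline k]

theorem rightDeriv_le (hF : IsConvexEnvelope f F) (hG : IsConvexEnvelope g G)
    (hg : ContinuousAt g k) (hfg : Monotone fun x => f x - g x) :
    derivWithin G (Ioi k) k ≤ derivWithin F (Ioi k) k := by
  by_contra! hlt
  obtain ⟨s, hFs, hsG⟩ := exists_between hlt
  have hFleft : ∀ w ≤ k, F k + s * (w - k) ≤ F w := fun w hw => by
    have : s * (w - k) ≤ derivWithin F (Ioi k) k * (w - k) :=
      mul_le_mul_of_nonpos_right hFs.le (by linarith)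
    linarith [hF.convexOn.add_rightDeriv_mul_sub_le (k := k) w]
  have hGk : F k - (f k - g k) ≤ G k := hG.le_of_lt_rightDeriv hg hsG fun w hw => by
    linarith [hfg hw, hFleft w hw, hF.le w]
  have hline : ∀ w, F k + s * (w - k) ≤ f w := by
    intro w
    rcases le_total w k with hw | hw
    · exact (hFleft w hw).trans (hF.le w)
    · have : s * (w - k) ≤ derivWithin G (Ioi k) k * (w - k) :=
        mul_le_mul_of_nonneg_right hsG.le (by linarith)
      linarith [hfg hw, hG.convexOn.add_rightDeriv_mul_sub_le (k := k) w, hG.le w]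
  exact hFs.not_ge (hF.convexOn.le_rightDeriv_of_forall_le fun w _ => hF.affine_le hline w)

theorem leftDeriv_le (hF : IsConvexEnvelope f F) (hG : IsConvexEnvelope g G)
    (hf : ContinuousAt f k) (hfg : Monotone fun x => f x - g x) :
    derivWithin G (Iio k) k ≤ derivWithin F (Iio k) k := by
  have h := hG.comp_neg.rightDeriv_le hF.comp_neg (k := -k)
    (hf.comp_of_eq continuousAt_neg (neg_neg k)) fun x y hxy => by
      linarith [hfg (neg_le_neg hxy)]
  simp only [derivWithin_comp_neg, neg_Ioi, neg_neg] at h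
  linarith

theorem oneSidedDeriv_comparison (hF : IsConvexEnvelope f F) (hG : IsConvexEnvelope g G)
    (hf : ContinuousAt f k) (hg : ContinuousAt g k) {c : ℝ} (h₁ : Monotone fun x => f x - g x)
    (h₂ : Monotone fun x => g x - (f x - c * x)) :
    (derivWithin F (Iio k) k - c ≤ derivWithin G (Iio k) k ∧
        derivWithin G (Iio k) k ≤ derivWithin F (Iio k) k) ∧
      (derivWithin F (Ioi k) k - c ≤ derivWithin G (Ioi k) k ∧
        derivWithin G (Ioi k) k ≤ derivWithin F (Ioi k) k) := by
  have hk : k ∈ interior univ := by simp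
  have hLeft := hG.leftDeriv_le (hF.sub_mul_id c) hg h₂
  have hRight := hG.rightDeriv_le (hF.sub_mul_id c)
    (hf.sub (continuousAt_const.mul continuousAt_id)) h₂
  rw [derivWithin_sub_mul_id (hF.convexOn.differentiableWithinAt_Iio_of_mem_interior hk)
    (uniqueDiffWithinAt_Iio k)] at hLeft
  rw [derivWithin_sub_mul_id (hF.convexOn.differentiableWithinAt_Ioi_of_mem_interior hk)
    (uniqueDiffWithinAt_Ioi k)] at hRight
  exact ⟨⟨hLeft, hF.leftDeriv_le hG hf h₁⟩, ⟨hRight, hF.rightDeriv_le hG hg h₁⟩⟩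

end IsConvexEnvelope

noncomputable def putPrice (μ : Measure ℝ) (k : ℝ) : ℝ := ∫ x, max (k - x) 0 ∂μ

section PutPrice

variable {μ : Measure ℝ} [IsFiniteMeasure μ]

lemma integrable_put_payoff (hμ : Integrable (fun x => x) μ) (k : ℝ) :
    Integrable (fun x => max (k - x) 0) μ :=
  ((integrable_const k).sub hμ).pos_part

lemma putPrice_sub_putPrice_eq (hμ : Integrable (fun x => x) μ) {a b : ℝ} :
    putPrice μ b - putPrice μ a = ∫ x, (max (b - x) 0 - max (a - x) 0) ∂μ :=
  (integral_sub (integrable_put_payoff hμ b) (integrable_put_payoff hμ a)).symm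

lemma mul_measureReal_Iic_le_putPrice_sub (hμ : Integrable (fun x => x) μ) {a b : ℝ}
    (hab : a ≤ b) :
    (b - a) * μ.real (Iic a) ≤ putPrice μ b - putPrice μ a := by
  rw [putPrice_sub_putPrice_eq hμ, mul_comm, ← smul_eq_mul,
    ← integral_indicator_const _ measurableSet_Iic]
  refine integral_mono ((integrable_const _).indicator measurableSet_Iic)
    ((integrable_put_payoff hμ b).sub (integrable_put_payoff hμ a)) fun x => ?_
  by_cases hx : x ≤ a
  · simp [hx, max_eq_left (by linarith : (0:ℝ) ≤ b - x)]
  · simpa [hx] using max_le_max_right 0 (by linarith : a - x ≤ b - x)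

lemma putPrice_sub_le_mul_measureReal_Iio (hμ : Integrable (fun x => x) μ) {a b : ℝ}
    (hab : a ≤ b) :
    putPrice μ b - putPrice μ a ≤ (b - a) * μ.real (Iio b) := by
  rw [putPrice_sub_putPrice_eq hμ, mul_comm, ← smul_eq_mul,
    ← integral_indicator_const _ measurableSet_Iio]
  refine integral_mono ((integrable_put_payoff hμ b).sub (integrable_put_payoff hμ a))
    ((integrable_const _).indicator measurableSet_Iio) fun x => ?_
  by_cases hx : x < b
  · simp only [indicator_of_mem (show x ∈ Iio b from hx),
      max_eq_left (by linarith : (0:ℝ) ≤ b - x)]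
    linarith [le_max_left (a - x) 0]
  · simp [hx, max_eq_right (by linarith : b - x ≤ 0), max_eq_right (by linarith : a - x ≤ 0)]

lemma monotoneOn_putPrice_sub_mul (hμ : Integrable (fun x => x) μ) {q u : ℝ}
    (hu : u ≤ μ.real (Iic q)) :
    MonotoneOn (fun w => putPrice μ w - u * w) (Ici q) := by
  intro a ha b _ hab
  have hua : u ≤ μ.real (Iic a) := hu.trans (measureReal_mono (Iic_subset_Iic.2 ha))
  nlinarith [mul_measureReal_Iic_le_putPrice_sub hμ hab]

lemma monotoneOn_mul_sub_putPrice (hμ : Integrable (fun x => x) μ) {r v : ℝ}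
    (hv : μ.real (Iio r) ≤ v) :
    MonotoneOn (fun w => v * w - putPrice μ w) (Iic r) := by
  intro a _ b hb hab
  have hvb : μ.real (Iio b) ≤ v := (measureReal_mono (Iio_subset_Iio hb)).trans hv
  nlinarith [putPrice_sub_le_mul_measureReal_Iio hμ hab]

end PutPrice

lemma lipschitzWith_putPrice {μ : Measure ℝ} [IsProbabilityMeasure μ]
    (hμ : Integrable (fun x => x) μ) : LipschitzWith 1 (putPrice μ) := by
  refine LipschitzWith.of_dist_le_mul fun a b => ?_
  rw [putPrice, putPrice, dist_eq_norm,
    ← integral_sub (integrable_put_payoff hμ a) (integrable_put_payoff hμ b)]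
  have h := norm_integral_le_of_norm_le_const (μ := μ)
    (f := fun x => max (a - x) 0 - max (b - x) 0) (C := |a - b|)
    (Eventually.of_forall fun x => by simpa using abs_max_sub_max_le_abs (a - x) (b - x) 0)
  simpa [Real.dist_eq] using h

lemma monotone_of_monotoneOn_Iic_Icc_Ici {α β : Type*} [LinearOrder α] [Preorder β] {f : α → β}
    {q r : α} (hqr : q ≤ r) (h₁ : MonotoneOn f (Iic q)) (h₂ : MonotoneOn f (Icc q r))
    (h₃ : MonotoneOn f (Ici r)) : Monotone f :=
  h₁.Iic_union_Ici <| Icc_union_Ici_eq_Ici hqr ▸ h₂.union_right h₃ (isGreatest_Icc hqr) isLeast_Ici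

/-- `ℰ_u = P_ν - extendAffine P_μ (G u) u`. -/
def extendAffine (P : ℝ → ℝ) (q u w : ℝ) : ℝ := P (min w q) + u * max (w - q) 0

section ExtendAffine

variable {P : ℝ → ℝ} {q r u v w : ℝ}

lemma extendAffine_of_le (hw : w ≤ q) : extendAffine P q u w = P w := by
  simp [extendAffine, min_eq_left hw, max_eq_right (sub_nonpos.2 hw)]

lemma extendAffine_of_ge (hw : q ≤ w) : extendAffine P q u w = P q + u * (w - q) := by
  simp [extendAffine, min_eq_right hw, max_eq_left (sub_nonneg.2 hw)]

lemma continuous_extendAffine (hP : Continuous P) : Continuous (extendAffine P q u) := by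
  unfold extendAffine
  fun_prop

lemma monotone_extendAffine_sub (hqr : q ≤ r) (huv : u ≤ v)
    (hP : MonotoneOn (fun w => P w - u * w) (Icc q r)) :
    Monotone fun w => extendAffine P r v w - extendAffine P q u w := by
  refine monotone_of_monotoneOn_Iic_Icc_Ici hqr ?_ ?_ ?_ <;> intro a ha b hb hab
  · simp only [extendAffine_of_le ha, extendAffine_of_le hb, extendAffine_of_le (ha.trans hqr),
      extendAffine_of_le ((mem_Iic.1 hb).trans hqr), le_refl, sub_self]
  · simp only [extendAffine_of_le ha.2, extendAffine_of_le hb.2, extendAffine_of_ge ha.1,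
      extendAffine_of_ge hb.1]
    linarith [hP ha hb hab]
  · simp only [extendAffine_of_ge ha, extendAffine_of_ge hb, extendAffine_of_ge (hqr.trans ha),
      extendAffine_of_ge (hqr.trans hb)]
    nlinarith

lemma monotone_sub_extendAffine_add (hqr : q ≤ r) (huv : u ≤ v)
    (hP : MonotoneOn (fun w => v * w - P w) (Icc q r)) :
    Monotone fun w => extendAffine P q u w - extendAffine P r v w + (v - u) * w := by
  refine monotone_of_monotoneOn_Iic_Icc_Ici hqr ?_ ?_ ?_ <;> intro a ha b hb hab
  · simp only [extendAffine_of_le ha, extendAffine_of_le hb, extendAffine_of_le (ha.trans hqr),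
      extendAffine_of_le ((mem_Iic.1 hb).trans hqr)]
    nlinarith
  · simp only [extendAffine_of_le ha.2, extendAffine_of_le hb.2, extendAffine_of_ge ha.1,
      extendAffine_of_ge hb.1]
    linarith [hP ha hb hab]
  · simp only [extendAffine_of_ge ha, extendAffine_of_ge hb, extendAffine_of_ge (hqr.trans ha),
      extendAffine_of_ge (hqr.trans hb)]
    linarith

end ExtendAffine

theorem stmt16_general
    (μ ν : Measure ℝ)
    [IsProbabilityMeasure μ] [IsProbabilityMeasure ν]
    (hμint : Integrable (fun x => x) μ) (hνint : Integrable (fun x => x) ν)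
    (Pμ Pν : ℝ → ℝ)
    (hPμ : ∀ k, Pμ k = ∫ x, max (k - x) 0 ∂μ)
    (hPν : ∀ k, Pν k = ∫ x, max (k - x) 0 ∂ν)
    (G : ℝ → ℝ) (hGmono : MonotoneOn G (Set.Ioo 0 1))
    (hGq : ∀ u ∈ Set.Ioo (0:ℝ) 1,
      (μ (Set.Iio (G u))).toReal ≤ u ∧ u ≤ (μ (Set.Iic (G u))).toReal)
    (E Ec : ℝ → ℝ → ℝ)
    (hE : ∀ u ∈ Set.Ioo (0:ℝ) 1, ∀ k, E u k = Pν k - Pμ (min k (G u)) - u * max (k - G u) 0)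
    (hEcConv : ∀ u ∈ Set.Ioo (0:ℝ) 1, ConvexOn ℝ Set.univ (Ec u))
    (hEcLe : ∀ u ∈ Set.Ioo (0:ℝ) 1, ∀ k, Ec u k ≤ E u k)
    (hEcMax : ∀ u ∈ Set.Ioo (0:ℝ) 1, ∀ h : ℝ → ℝ, ConvexOn ℝ Set.univ h →
      (∀ k, h k ≤ E u k) → ∀ k, h k ≤ Ec u k)
    :
    ∀ u v : ℝ, 0 < u → u < v → v < 1 → ∀ k : ℝ,
      (derivWithin (Ec u) (Set.Iio k) k - (v - u) ≤ derivWithin (Ec v) (Set.Iio k) k ∧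
        derivWithin (Ec v) (Set.Iio k) k ≤ derivWithin (Ec u) (Set.Iio k) k) ∧
      (derivWithin (Ec u) (Set.Ioi k) k - (v - u) ≤ derivWithin (Ec v) (Set.Ioi k) k ∧
        derivWithin (Ec v) (Set.Ioi k) k ≤ derivWithin (Ec u) (Set.Ioi k) k) := by
  intro u v hu huv hv k
  obtain rfl : Pμ = putPrice μ := funext hPμ
  obtain rfl : Pν = putPrice ν := funext hPν
  have hu01 : u ∈ Ioo (0:ℝ) 1 := ⟨hu, huv.trans hv⟩
  have hv01 : v ∈ Ioo (0:ℝ) 1 := ⟨hu.trans huv, hv⟩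
  have hEnv {w} (hw : w ∈ Ioo (0:ℝ) 1) : IsConvexEnvelope (E w) (Ec w) :=
    ⟨hEcConv w hw, hEcLe w hw, hEcMax w hw⟩
  have hEeq {w} (hw : w ∈ Ioo (0:ℝ) 1) (x : ℝ) :
      E w x = putPrice ν x - extendAffine (putPrice μ) (G w) w x := by
    rw [hE w hw, extendAffine]; ring
  have hEcont {w} (hw : w ∈ Ioo (0:ℝ) 1) : Continuous (E w) := by
    rw [funext (hEeq hw)]
    exact (lipschitzWith_putPrice hνint).continuous.sub
      (continuous_extendAffine (lipschitzWith_putPrice hμint).continuous)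
  have hGuv : G u ≤ G v := hGmono hu01 hv01 huv.le
  have hd₁ : Monotone fun x => E u x - E v x := by
    simpa only [hEeq hu01, hEeq hv01, sub_sub_sub_cancel_left] using
      monotone_extendAffine_sub hGuv huv.le
        ((monotoneOn_putPrice_sub_mul hμint (hGq u hu01).2).mono Icc_subset_Ici_self)
  have hd₂ : Monotone fun x => E v x - (E u x - (v - u) * x) := by
    convert monotone_sub_extendAffine_add hGuv huv.le
      ((monotoneOn_mul_sub_putPrice hμint (hGq v hv01).1).mono Icc_subset_Iic_self) using 2 with x
    rw [hEeq hu01, hEeq hv01]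
    ring
  exact (hEnv hu01).oneSidedDeriv_comparison (hEnv hv01) (hEcont hu01).continuousAt
    (hEcont hv01).continuousAt hd₁ hd₂

theorem stmt16
    (μ ν : Measure ℝ)
    [IsProbabilityMeasure μ] [IsProbabilityMeasure ν]
    (hμint : Integrable (fun x => x) μ) (hνint : Integrable (fun x => x) ν)
    (hcx : ∀ f : ℝ → ℝ, ConvexOn ℝ Set.univ f → Integrable f μ → Integrable f ν →
      ∫ x, f x ∂μ ≤ ∫ x, f x ∂ν)
    (Pμ Pν D : ℝ → ℝ)
    (hPμ : ∀ k, Pμ k = ∫ x, max (k - x) 0 ∂μ)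
    (hPν : ∀ k, Pν k = ∫ x, max (k - x) 0 ∂ν)
    (hD : ∀ k, D k = Pν k - Pμ k)
    (hDconn : Set.OrdConnected {k : ℝ | 0 < D k})
    (G : ℝ → ℝ) (hGmono : MonotoneOn G (Set.Ioo 0 1))
    (hGq : ∀ u ∈ Set.Ioo (0:ℝ) 1,
      (μ (Set.Iio (G u))).toReal ≤ u ∧ u ≤ (μ (Set.Iic (G u))).toReal)
    (E Ec : ℝ → ℝ → ℝ)
    (hE : ∀ u ∈ Set.Ioo (0:ℝ) 1, ∀ k, E u k = Pν k - Pμ (min k (G u)) - u * max (k - G u) 0)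
    (hEcConv : ∀ u ∈ Set.Ioo (0:ℝ) 1, ConvexOn ℝ Set.univ (Ec u))
    (hEcLe : ∀ u ∈ Set.Ioo (0:ℝ) 1, ∀ k, Ec u k ≤ E u k)
    (hEcMax : ∀ u ∈ Set.Ioo (0:ℝ) 1, ∀ h : ℝ → ℝ, ConvexOn ℝ Set.univ h →
      (∀ k, h k ≤ E u k) → ∀ k, h k ≤ Ec u k)
    :
    ∀ u v : ℝ, 0 < u → u < v → v < 1 → ∀ k : ℝ,
      (derivWithin (Ec u) (Set.Iio k) k - (v - u) ≤ derivWithin (Ec v) (Set.Iio k) k ∧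
        derivWithin (Ec v) (Set.Iio k) k ≤ derivWithin (Ec u) (Set.Iio k) k) ∧
      (derivWithin (Ec u) (Set.Ioi k) k - (v - u) ≤ derivWithin (Ec v) (Set.Ioi k) k ∧
        derivWithin (Ec v) (Set.Ioi k) k ≤ derivWithin (Ec u) (Set.Ioi k) k) :=
  stmt16_general μ ν hμint hνint Pμ Pν hPμ hPν G hGmono hGq E Ec hE hEcConv hEcLe hEcMax
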